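/- Let (Ω, 𝓐, ℙ) be a probability space, let U, V, W : Ω → ℝ be random variables with E[(V-U)²] < ∞ and E[|V-W|] < ∞ and E[|W-U|] < ∞, let y ∈ ℝ, and let φ : ℝ → ℝ be a bounded differentiable function whose derivative φ' is bounded and Lipschitz continuous with Lipschitz constant L. Then |E[e^{i y V} φ(V)]| ≤ |E[e^{i y W} (φ(U) + φ'(U)(W - U))]| + L · E[(V-U)²] + (|y| · ‖φ‖_∞ + ‖φ'‖_∞) · E[|V-W|]. -/

import Mathlib

/-!
Pointwise, `e^{iyV} φ(V) - e^{iyW}(φ(U) + φ'(U)(W - U))` splits as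
`(e^{iyV} - e^{iyW}) φ(V) + e^{iyW}(φ(V) - φ(U) - φ'(U)(V - U)) + e^{iyW} φ'(U)(V - W)`.
The first term is at most `|y| ‖φ‖_∞ |V - W|`, the second is a first-order Taylor remainder,
at most `L (V - U)²` because `φ'` is `L`-Lipschitz, and the third is at most `‖φ'‖_∞ |V - W|`.
Integrating this pointwise bound gives the claim.
-/

open MeasureTheory Real Complex

lemma abs_sub_sub_deriv_mul_le_of_abs_deriv_sub_le {φ : ℝ → ℝ} (hφ : Differentiable ℝ φ)
    {L : ℝ} (hL : ∀ x z : ℝ, |deriv φ x - deriv φ z| ≤ L * |x - z|) (a b : ℝ) :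
    |φ b - φ a - deriv φ a * (b - a)| ≤ L * (b - a) ^ 2 := by
  have hL0 : 0 ≤ L := (abs_nonneg _).trans (by simpa using hL 1 0)
  have hderiv : ∀ x, HasDerivAt (fun x => φ x - deriv φ a * x) (deriv φ x - deriv φ a) x :=
    fun x => ((hφ x).hasDerivAt.sub ((hasDerivAt_id' x).const_mul (deriv φ a))).congr_deriv
      (by ring)
  have hbound : ∀ x ∈ Set.uIcc a b, ‖deriv φ x - deriv φ a‖ ≤ L * |b - a| := fun x hx =>
    (hL x a).trans (mul_le_mul_of_nonneg_left (Set.abs_sub_left_of_mem_uIcc hx) hL0)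
  have hmvt := (convex_uIcc a b).norm_image_sub_le_of_norm_hasDerivWithin_le
    (fun x _ => (hderiv x).hasDerivWithinAt) hbound Set.left_mem_uIcc Set.right_mem_uIcc
  calc |φ b - φ a - deriv φ a * (b - a)|
      = ‖(φ b - deriv φ a * b) - (φ a - deriv φ a * a)‖ := by rw [Real.norm_eq_abs]; ring_nf
    _ ≤ L * |b - a| * ‖b - a‖ := hmvt
    _ = L * (b - a) ^ 2 := by rw [Real.norm_eq_abs, mul_assoc, abs_mul_abs_self, sq]

lemma norm_cexp_I_mul_sub_cexp_I_mul_le (y v w : ℝ) :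
    ‖cexp (I * y * v) - cexp (I * y * w)‖ ≤ |y| * |v - w| := by
  have hsplit : cexp (I * y * v) - cexp (I * y * w) =
      cexp (I * y * w) * (cexp (I * ↑(y * (v - w))) - 1) := by
    rw [mul_sub, mul_one, ← Complex.exp_add]; push_cast; ring_nf
  rw [hsplit]
  calc ‖cexp (I * y * w) * (cexp (I * ↑(y * (v - w))) - 1)‖
      = ‖cexp (I * ↑(y * (v - w))) - 1‖ := by simp [Complex.norm_exp]
    _ ≤ ‖y * (v - w)‖ := Real.norm_exp_I_mul_ofReal_sub_one_le
    _ = |y| * |v - w| := by rw [Real.norm_eq_abs, abs_mul]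

lemma norm_cexp_mul_sub_cexp_mul_taylor_le {φ : ℝ → ℝ} (hφ : Differentiable ℝ φ) {L : ℝ}
    (hL : ∀ x z : ℝ, |deriv φ x - deriv φ z| ≤ L * |x - z|) {C C' : ℝ} (hC : ∀ x, |φ x| ≤ C)
    (hC' : ∀ x, |deriv φ x| ≤ C') (y u v w : ℝ) :
    ‖cexp (I * y * v) * φ v - cexp (I * y * w) * (φ u + deriv φ u * (w - u))‖ ≤
      L * (v - u) ^ 2 + (|y| * C + C') * |v - w| := by
  have hsplit : cexp (I * y * v) * φ v - cexp (I * y * w) * (φ u + deriv φ u * (w - u)) =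
      (cexp (I * y * v) - cexp (I * y * w)) * φ v +
        cexp (I * y * w) * ↑(φ v - φ u - deriv φ u * (v - u)) +
        cexp (I * y * w) * ↑(deriv φ u * (v - w)) := by
    push_cast; ring
  have hnorm : ∀ t : ℝ, ‖cexp (I * y * t)‖ = 1 := fun t => by simp [Complex.norm_exp]
  have hexp : ‖(cexp (I * y * v) - cexp (I * y * w)) * φ v‖ ≤ |y| * |v - w| * C := by
    rw [norm_mul, norm_real, Real.norm_eq_abs]
    exact mul_le_mul (norm_cexp_I_mul_sub_cexp_I_mul_le y v w) (hC v) (abs_nonneg _)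
      (by positivity)
  have htaylor : ‖cexp (I * y * w) * ↑(φ v - φ u - deriv φ u * (v - u))‖ ≤ L * (v - u) ^ 2 := by
    rw [norm_mul, hnorm, one_mul, norm_real, Real.norm_eq_abs]
    exact abs_sub_sub_deriv_mul_le_of_abs_deriv_sub_le hφ hL u v
  have hderiv : ‖cexp (I * y * w) * ↑(deriv φ u * (v - w))‖ ≤ C' * |v - w| := by
    rw [norm_mul, hnorm, one_mul, norm_real, Real.norm_eq_abs, abs_mul]
    exact mul_le_mul_of_nonneg_right (hC' u) (abs_nonneg _)
  rw [hsplit]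
  refine (norm_add₃_le ..).trans ?_
  linarith

lemma norm_integral_le_norm_integral_add_of_norm_sub_le {α E : Type*} [MeasurableSpace α]
    {μ : Measure α} [NormedAddCommGroup E] [NormedSpace ℝ E] {f g : α → E} {b : α → ℝ}
    (hf : Integrable f μ) (hg : AEStronglyMeasurable g μ) (hb : Integrable b μ)
    (hfg : ∀ᵐ a ∂μ, ‖f a - g a‖ ≤ b a) :
    ‖∫ a, f a ∂μ‖ ≤ ‖∫ a, g a ∂μ‖ + ∫ a, b a ∂μ := by
  have hsub : Integrable (f - g) μ := hb.mono' (hf.aestronglyMeasurable.sub hg) hfg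
  have hg : Integrable g μ := by simpa using hf.sub hsub
  calc ‖∫ a, f a ∂μ‖ ≤ ‖∫ a, g a ∂μ‖ + ‖∫ a, f a ∂μ - ∫ a, g a ∂μ‖ := norm_le_norm_add_norm_sub' _ _
    _ ≤ ‖∫ a, g a ∂μ‖ + ∫ a, b a ∂μ := by
      rw [← integral_sub hf hg]
      gcongr
      exact norm_integral_le_of_norm_le hb hfg

theorem stmt_6_general {Ω : Type*} [MeasurableSpace Ω] (P : Measure Ω) [IsProbabilityMeasure P]
    (U V W : Ω → ℝ) (hU : Measurable U) (hV : Measurable V) (hW : Measurable W)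
    (hVU : Integrable (fun ω => (V ω - U ω) ^ 2) P)
    (hVW : Integrable (fun ω => |V ω - W ω|) P)
    (y : ℝ) (φ : ℝ → ℝ) (hφ : Differentiable ℝ φ)
    (hφb : ∃ M : ℝ, ∀ x : ℝ, |φ x| ≤ M)
    (hφ'b : ∃ M : ℝ, ∀ x : ℝ, |deriv φ x| ≤ M)
    (L : ℝ) (hL : ∀ x z : ℝ, |deriv φ x - deriv φ z| ≤ L * |x - z|) :
    ‖∫ ω, Complex.exp (Complex.I * y * V ω) * (φ (V ω) : ℂ) ∂P‖ ≤
      ‖∫ ω, Complex.exp (Complex.I * y * W ω) *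
          ((φ (U ω) : ℂ) + (Complex.ofReal (deriv φ (U ω))) * ((W ω : ℂ) - (U ω : ℂ))) ∂P‖ +
        L * (∫ ω, (V ω - U ω) ^ 2 ∂P) +
        (|y| * (⨆ x : ℝ, |φ x|) + (⨆ x : ℝ, |deriv φ x|)) * (∫ ω, |V ω - W ω| ∂P) := by
  obtain ⟨M, hM⟩ := hφb
  obtain ⟨M', hM'⟩ := hφ'b
  have hC : ∀ x, |φ x| ≤ ⨆ x, |φ x| := le_ciSup ⟨M, Set.forall_mem_range.2 hM⟩
  have hC' : ∀ x, |deriv φ x| ≤ ⨆ x, |deriv φ x| := le_ciSup ⟨M', Set.forall_mem_range.2 hM'⟩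
  have hφm : Measurable φ := hφ.continuous.measurable
  have hφ'm : Measurable (deriv φ) :=
    (LipschitzWith.of_dist_le' (K := L) (by simpa [Real.dist_eq] using hL)).continuous.measurable
  have hf : Integrable (fun ω => cexp (I * y * V ω) * (φ (V ω) : ℂ)) P := by
    refine .of_bound (by fun_prop) M (ae_of_all _ fun ω => ?_)
    simpa [Complex.norm_exp] using hM (V ω)
  rw [add_assoc, ← integral_const_mul, ← integral_const_mul, ← integral_add (hVU.const_mul L)
    (hVW.const_mul _)]
  exact norm_integral_le_norm_integral_add_of_norm_sub_le hf (by fun_prop)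
    ((hVU.const_mul L).add (hVW.const_mul _)) (ae_of_all _ fun ω =>
      norm_cexp_mul_sub_cexp_mul_taylor_le hφ hL hC hC' y (U ω) (V ω) (W ω))

/-- Milstein-type approximation bound for characteristic integrals. For random
variables `U, V, W`, `y ∈ ℝ` and a bounded differentiable `φ` with bounded `L`-Lipschitz
derivative,
`|E[e^{iyV} φ(V)]| ≤ |E[e^{iyW}(φ(U) + φ'(U)(W-U))]| + L·E[(V-U)²] + (|y|·‖φ‖_∞ + ‖φ'‖_∞)·E[|V-W|]`. -/
theorem stmt_6 {Ω : Type*} [MeasurableSpace Ω] (P : Measure Ω) [IsProbabilityMeasure P]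
    (U V W : Ω → ℝ) (hU : Measurable U) (hV : Measurable V) (hW : Measurable W)
    (hVU : Integrable (fun ω => (V ω - U ω) ^ 2) P)
    (hVW : Integrable (fun ω => |V ω - W ω|) P)
    (hWU : Integrable (fun ω => |W ω - U ω|) P)
    (y : ℝ) (φ : ℝ → ℝ) (hφ : Differentiable ℝ φ)
    (hφb : ∃ M : ℝ, ∀ x : ℝ, |φ x| ≤ M)
    (hφ'b : ∃ M : ℝ, ∀ x : ℝ, |deriv φ x| ≤ M)
    (L : ℝ) (hL : ∀ x z : ℝ, |deriv φ x - deriv φ z| ≤ L * |x - z|) :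
    ‖∫ ω, Complex.exp (Complex.I * y * V ω) * (φ (V ω) : ℂ) ∂P‖ ≤
      ‖∫ ω, Complex.exp (Complex.I * y * W ω) *
          ((φ (U ω) : ℂ) + (Complex.ofReal (deriv φ (U ω))) * ((W ω : ℂ) - (U ω : ℂ))) ∂P‖ +
        L * (∫ ω, (V ω - U ω) ^ 2 ∂P) +
        (|y| * (⨆ x : ℝ, |φ x|) + (⨆ x : ℝ, |deriv φ x|)) * (∫ ω, |V ω - W ω| ∂P) :=
  stmt_6_general P U V W hU hV hW hVU hVW y φ hφ hφb hφ'b L hL
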